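/- For an L♮-convex function g : ℤⁿ → ℝ ∪ {+∞} and any positive integer s, the scaled function g̃(p) = g(s·p) is L♮-convex. -/

import Mathlib

/-- The set of multimodular directions
`F = {-e₁, e₁-e₂, e₂-e₃, …, e_{n-1}-eₙ, eₙ}` (1-indexed unit vectors). -/
def mmDir (n : ℕ) : Set (Fin n → ℤ) :=
  {d | ∃ k ≤ n, d = fun j : Fin n =>
    (if (j : ℕ) + 1 = k then 1 else 0) - (if (j : ℕ) + 1 = k + 1 then 1 else 0)}

/-- `f : ℤⁿ → ℝ ∪ {+∞}` is multimodular. -/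
def Multimodular {n : ℕ} (f : (Fin n → ℤ) → WithTop ℝ) : Prop :=
  ∀ z : Fin n → ℤ, f z ≠ ⊤ →
    ∀ d ∈ mmDir n, ∀ d' ∈ mmDir n, d ≠ d' →
      f z + f (z + d + d') ≤ f (z + d) + f (z + d')

/-- Submodularity on `ℤᵐ`. -/
def Submodular {m : ℕ} (h : (Fin m → ℤ) → WithTop ℝ) : Prop :=
  ∀ x y : Fin m → ℤ, h (x ⊔ y) + h (x ⊓ y) ≤ h x + h y

/-- L♮-convexity via discrete midpoint convexity. -/
def LnatConvex {n : ℕ} (g : (Fin n → ℤ) → WithTop ℝ) : Prop :=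
  ∀ p q : Fin n → ℤ,
    g (fun j => Int.fdiv (p j + q j + 1) 2) + g (fun j => Int.fdiv (p j + q j) 2)
      ≤ g p + g q

/-! Scaling is transparent for translation-submodularity,
`g p + g q ≥ g ((p - α𝟙) ⊔ q) + g (p ⊓ (q + α𝟙))` for all `α ∈ ℕ`: for `g (s • ·)` it is the
instance `s * α` of the same inequality for `g`. So it suffices that discrete midpoint convexity
is equivalent to translation-submodularity.

From translation-submodularity, translating by `1` keeps `p + q`, hence both midpoints, and
shrinks `∑ |pᵢ - qᵢ|` until all coordinates differ by at most one; there the midpoints are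
`p ⊔ q` and `p ⊓ q`, and the case `α = 0` applies. Conversely, submodularity and then
translation-submodularity are proved by induction on `maxᵢ |pᵢ - qᵢ|` and on `α`, routing each
inequality through the midpoints of `p` and `q`, which halves the distance. -/

namespace WithTop

variable {a b c d : WithTop ℝ}

theorem ne_top_of_add_le_add (h : a + b ≤ c + d) (hc : c ≠ ⊤) (hd : d ≠ ⊤) :
    a ≠ ⊤ ∧ b ≠ ⊤ :=
  add_ne_top.mp (ne_top_of_le_ne_top (add_ne_top.mpr ⟨hc, hd⟩) h)

theorem le_of_add_le_add_of_le (h : a + c ≤ b + d) (hdc : d ≤ c) (hd : b ≠ ⊤ → d ≠ ⊤) :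
    a ≤ b := by
  rcases eq_or_ne b ⊤ with rfl | hb
  · exact le_top
  have hc : c ≠ ⊤ := (ne_top_of_add_le_add h hb (hd hb)).2
  exact (WithTop.add_le_add_iff_right hc).mp (h.trans (add_le_add_right hdc b))

end WithTop

section

variable {n : ℕ}

def midpointCeil (p q : Fin n → ℤ) : Fin n → ℤ := fun j => Int.fdiv (p j + q j + 1) 2

def midpointFloor (p q : Fin n → ℤ) : Fin n → ℤ := fun j => Int.fdiv (p j + q j) 2

@[simp]
theorem midpointCeil_apply (p q : Fin n → ℤ) (i : Fin n) :
    midpointCeil p q i = (p i + q i + 1) / 2 :=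
  Int.fdiv_eq_ediv_of_nonneg _ (by norm_num)

@[simp]
theorem midpointFloor_apply (p q : Fin n → ℤ) (i : Fin n) :
    midpointFloor p q i = (p i + q i) / 2 :=
  Int.fdiv_eq_ediv_of_nonneg _ (by norm_num)

theorem midpointCeil_comm (p q : Fin n → ℤ) : midpointCeil p q = midpointCeil q p := by
  ext i; simp only [midpointCeil_apply]; omega

theorem midpointFloor_comm (p q : Fin n → ℤ) : midpointFloor p q = midpointFloor q p := by
  ext i; simp only [midpointFloor_apply]; omega

theorem midpointCeil_eq_sup {p q : Fin n → ℤ} (h : ∀ i, (p i - q i).natAbs ≤ 1) :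
    midpointCeil p q = p ⊔ q := by
  ext i; have := h i; simp only [midpointCeil_apply, Pi.sup_apply]; omega

theorem midpointFloor_eq_inf {p q : Fin n → ℤ} (h : ∀ i, (p i - q i).natAbs ≤ 1) :
    midpointFloor p q = p ⊓ q := by
  ext i; have := h i; simp only [midpointFloor_apply, Pi.inf_apply]; omega

theorem natAbs_sub_le_sum (p q : Fin n → ℤ) (i : Fin n) :
    (p i - q i).natAbs ≤ ∑ j, (p j - q j).natAbs :=
  Finset.single_le_sum (f := fun j => (p j - q j).natAbs) (fun _ _ => Nat.zero_le _)
    (Finset.mem_univ i)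

variable (g : (Fin n → ℤ) → WithTop ℝ)

def SubmodularAt (p q : Fin n → ℤ) : Prop :=
  g (p ⊔ q) + g (p ⊓ q) ≤ g p + g q

/-- Here `α` is cast to the constant vector `α𝟙`. -/
def TranslationSubmodularAt (α : ℕ) (p q : Fin n → ℤ) : Prop :=
  g ((p - α) ⊔ q) + g (p ⊓ (q + α)) ≤ g p + g q

def TranslationSubmodular : Prop :=
  ∀ (α : ℕ) (p q : Fin n → ℤ), TranslationSubmodularAt g α p q

variable {g}

theorem TranslationSubmodular.comp_smul (hg : TranslationSubmodular g) (s : ℕ) :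
    TranslationSubmodular (fun p => g ((s : ℤ) • p)) := by
  intro α p q
  have hs : (0 : ℤ) ≤ s := Int.natCast_nonneg s
  have hsup : (s : ℤ) • ((p - α) ⊔ q) = ((s : ℤ) • p - (s * α : ℕ)) ⊔ (s : ℤ) • q := by
    ext i
    simp only [Pi.smul_apply, Pi.sup_apply, Pi.sub_apply, Pi.natCast_apply, smul_eq_mul]
    rw [mul_max_of_nonneg _ _ hs, mul_sub]; push_cast; ring_nf
  have hinf : (s : ℤ) • (p ⊓ (q + α)) = (s : ℤ) • p ⊓ ((s : ℤ) • q + (s * α : ℕ)) := by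
    ext i
    simp only [Pi.smul_apply, Pi.inf_apply, Pi.add_apply, Pi.natCast_apply, smul_eq_mul]
    rw [mul_min_of_nonneg _ _ hs, mul_add]; push_cast; ring_nf
  simpa only [TranslationSubmodularAt, hsup, hinf] using
    hg (s * α) ((s : ℤ) • p) ((s : ℤ) • q)

theorem TranslationSubmodular.lnatConvex (hg : TranslationSubmodular g) : LnatConvex g := by
  intro x y
  change g (midpointCeil x y) + g (midpointFloor x y) ≤ g x + g y
  induction hN : ∑ i, (x i - y i).natAbs using Nat.strong_induction_on generalizing x y with
  | _ N ih =>
  by_cases hclose : ∀ i, (x i - y i).natAbs ≤ 1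
  · rw [midpointCeil_eq_sup hclose, midpointFloor_eq_inf hclose]
    simpa [TranslationSubmodularAt] using hg 0 x y
  obtain ⟨i₀, hi₀⟩ := not_forall.mp hclose
  wlog hpos : 2 ≤ x i₀ - y i₀ generalizing x y
  · rw [midpointCeil_comm, midpointFloor_comm, add_comm (g x)]
    refine this y x ?_ (fun h => hclose fun i => ?_) (by omega) (by omega)
    · rw [← hN]; exact Finset.sum_congr rfl fun i _ => by omega
    · have := h i; omega
  set x' := (x - (1 : ℕ)) ⊔ y
  set y' := x ⊓ (y + (1 : ℕ))
  have hsum : ∀ i, x' i + y' i = x i + y i := fun i => by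
    simp only [x', y', Pi.sup_apply, Pi.inf_apply, Pi.sub_apply, Pi.add_apply, Pi.natCast_apply]
    omega
  have hdist : ∑ i, (x' i - y' i).natAbs < N := by
    rw [← hN]
    refine Finset.sum_lt_sum (fun i _ => ?_) ⟨i₀, Finset.mem_univ _, ?_⟩ <;>
    · simp only [x', y', Pi.sup_apply, Pi.inf_apply, Pi.sub_apply, Pi.add_apply, Pi.natCast_apply]
      omega
  calc g (midpointCeil x y) + g (midpointFloor x y)
      = g (midpointCeil x' y') + g (midpointFloor x' y') := by
        congr 2 <;> ext i <;> simp only [midpointCeil_apply, midpointFloor_apply, hsum]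
    _ ≤ g x' + g y' := ih _ hdist x' y' rfl
    _ ≤ g x + g y := hg 1 x y

theorem LnatConvex.submodularAt_of_midpoints (hg : LnatConvex g) {x y : Fin n → ℤ}
    (h₁ : SubmodularAt g x (midpointFloor x y)) (h₂ : SubmodularAt g y (midpointCeil x y))
    (h₃ : SubmodularAt g (x ⊔ midpointFloor x y) (y ⊔ midpointCeil x y))
    (h₄ : SubmodularAt g (x ⊓ midpointFloor x y) (y ⊓ midpointCeil x y)) :
    SubmodularAt g x y := by
  set mu := midpointCeil x y
  set md := midpointFloor x y
  set m₁ := (x ⊔ md) ⊓ (y ⊔ mu)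
  set m₂ := (x ⊓ md) ⊔ (y ⊓ mu)
  have e₃ : (x ⊔ md) ⊔ (y ⊔ mu) = x ⊔ y := by
    ext i; simp only [mu, md, Pi.sup_apply, midpointCeil_apply, midpointFloor_apply]; omega
  have e₄ : (x ⊓ md) ⊓ (y ⊓ mu) = x ⊓ y := by
    ext i; simp only [mu, md, Pi.inf_apply, midpointCeil_apply, midpointFloor_apply]; omega
  have e₅ : midpointCeil m₁ m₂ = mu ∧ midpointFloor m₁ m₂ = md := by
    constructor <;> ext i <;>
    · simp only [m₁, m₂, mu, md, Pi.sup_apply, Pi.inf_apply, midpointCeil_apply,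
        midpointFloor_apply]
      omega
  have h₅ : g mu + g md ≤ g m₁ + g m₂ := e₅.1 ▸ e₅.2 ▸ hg m₁ m₂
  rw [SubmodularAt, e₃] at h₃
  rw [SubmodularAt, e₄] at h₄
  refine WithTop.le_of_add_le_add_of_le ?_ h₅ fun hxy => ne_top_of_le_ne_top hxy (hg x y)
  calc g (x ⊔ y) + g (x ⊓ y) + (g m₁ + g m₂)
      = (g (x ⊔ y) + g m₁) + (g m₂ + g (x ⊓ y)) := by abel
    _ ≤ (g (x ⊔ md) + g (y ⊔ mu)) + (g (x ⊓ md) + g (y ⊓ mu)) := add_le_add h₃ h₄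
    _ = (g (x ⊔ md) + g (x ⊓ md)) + (g (y ⊔ mu) + g (y ⊓ mu)) := by abel
    _ ≤ (g x + g md) + (g y + g mu) := add_le_add h₁ h₂
    _ = g x + g y + (g mu + g md) := by abel

theorem LnatConvex.submodularAt_of_natAbs_sub_le (hg : LnatConvex g) (D : ℕ) (x y : Fin n → ℤ)
    (hD : ∀ i, (x i - y i).natAbs ≤ D) : SubmodularAt g x y := by
  induction D using Nat.strong_induction_on generalizing x y with
  | _ D ih =>
  by_cases hD₁ : D ≤ 1
  · have hclose i : (x i - y i).natAbs ≤ 1 := (hD i).trans hD₁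
    rw [SubmodularAt, ← midpointCeil_eq_sup hclose, ← midpointFloor_eq_inf hclose]
    exact hg x y
  have ih' (u v : Fin n → ℤ) (h : ∀ i, (u i - v i).natAbs ≤ D - 1) : SubmodularAt g u v :=
    ih (D - 1) (by omega) u v h
  refine hg.submodularAt_of_midpoints (ih' _ _ ?_) (ih' _ _ ?_) (ih' _ _ ?_) (ih' _ _ ?_)
  all_goals
    intro i; have := hD i
    simp only [Pi.sup_apply, Pi.inf_apply, midpointCeil_apply, midpointFloor_apply]; omega

theorem LnatConvex.translationSubmodularAt_one (hg : LnatConvex g) {x y : Fin n → ℤ}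
    (hD : ∀ i, (x i - y i).natAbs ≤ 2) : TranslationSubmodularAt g 1 x y := by
  rw [TranslationSubmodularAt, Nat.cast_one]
  set y₀ := x ⊓ y
  set y₁ := midpointCeil y₀ y
  set t := midpointFloor y₀ x
  set u := midpointCeil y₁ t
  have I₀ : g (x ⊓ (y + 1)) + g t ≤ g y₀ + g x := by
    have e : midpointCeil y₀ x = x ⊓ (y + 1) := by
      ext i; have := hD i
      simp only [y₀, midpointCeil_apply, Pi.inf_apply, Pi.add_apply, Pi.one_apply]; omega
    rw [← e]; exact hg y₀ x
  have I₁ : g u + g y₀ ≤ g y₁ + g t := by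
    have e : midpointFloor y₁ t = y₀ := by
      ext i; have := hD i
      simp only [y₀, y₁, t, midpointCeil_apply, midpointFloor_apply, Pi.inf_apply]; omega
    rw [← e]; exact hg y₁ t
  have I₂ : g ((x - 1) ⊔ y) + g y₁ ≤ g y + g u := by
    have e₁ : midpointCeil y u = (x - 1) ⊔ y := by
      ext i; have := hD i
      simp only [y₀, y₁, t, u, midpointCeil_apply, midpointFloor_apply, Pi.inf_apply,
        Pi.sup_apply, Pi.sub_apply, Pi.one_apply]; omega
    have e₂ : midpointFloor y u = y₁ := by
      ext i; have := hD i
      simp only [y₀, y₁, t, u, midpointCeil_apply, midpointFloor_apply, Pi.inf_apply]; omega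
    rw [← e₁, ← e₂]; exact hg y u
  have hfin (hxy : g x + g y ≠ ⊤) : g y₀ + g y₁ + (g t + g u) ≠ ⊤ := by
    obtain ⟨hx, hy⟩ := WithTop.add_ne_top.mp hxy
    have hy₀ := (WithTop.ne_top_of_add_le_add
      (hg.submodularAt_of_natAbs_sub_le 2 x y hD) hx hy).2
    have hy₁ := (WithTop.ne_top_of_add_le_add (hg y₀ y) hy₀ hy).1
    have ht := (WithTop.ne_top_of_add_le_add I₀ hy₀ hx).2
    have hu := (WithTop.ne_top_of_add_le_add I₁ hy₁ ht).1
    simp only [ne_eq, WithTop.add_eq_top, not_or]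
    exact ⟨⟨hy₀, hy₁⟩, ht, hu⟩
  refine WithTop.le_of_add_le_add_of_le ?_ le_rfl hfin
  calc g ((x - 1) ⊔ y) + g (x ⊓ (y + 1)) + (g y₀ + g y₁ + (g t + g u))
      = (g ((x - 1) ⊔ y) + g y₁) + ((g u + g y₀) + (g (x ⊓ (y + 1)) + g t)) := by abel
    _ ≤ (g y + g u) + ((g y₁ + g t) + (g y₀ + g x)) := add_le_add I₂ (add_le_add I₁ I₀)
    _ = g x + g y + (g y₀ + g y₁ + (g t + g u)) := by abel

theorem LnatConvex.translationSubmodularAt_add (hg : LnatConvex g) {x y : Fin n → ℤ} {a b : ℕ}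
    (hba : b ≤ a) (hab : a ≤ b + 1)
    (h₁ : TranslationSubmodularAt g a x (midpointFloor x y))
    (h₂ : TranslationSubmodularAt g b ((x - a) ⊔ midpointFloor x y) y)
    (h₃ : TranslationSubmodularAt g a (x ⊓ (midpointFloor x y + a))
      (((x - a) ⊔ midpointFloor x y) ⊓ (y + b))) :
    TranslationSubmodularAt g (a + b) x y := by
  set md := midpointFloor x y
  set A := (x - a) ⊔ md
  set A' := x ⊓ (md + a)
  set C := A ⊓ (y + b)
  have e₂ : (A - b) ⊔ y = (x - (a + b : ℕ)) ⊔ y := by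
    ext i
    simp only [A, md, midpointFloor_apply, Pi.sup_apply, Pi.sub_apply, Pi.natCast_apply]
    push_cast; omega
  have e₃ : (A' - a) ⊔ C = md := by
    ext i
    simp only [A, A', C, md, midpointFloor_apply, Pi.sup_apply, Pi.inf_apply, Pi.sub_apply,
      Pi.add_apply, Pi.natCast_apply]
    omega
  have e₃' : A' ⊓ (C + a) = x ⊓ (y + (a + b : ℕ)) := by
    ext i
    simp only [A, A', C, md, midpointFloor_apply, Pi.sup_apply, Pi.inf_apply, Pi.sub_apply,
      Pi.add_apply, Pi.natCast_apply]
    push_cast; omega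
  rw [TranslationSubmodularAt] at h₁ h₂ h₃ ⊢
  rw [e₂] at h₂
  rw [e₃, e₃'] at h₃
  have hfin (hxy : g x + g y ≠ ⊤) : g C + g md ≠ ⊤ := by
    obtain ⟨hx, hy⟩ := WithTop.add_ne_top.mp hxy
    have hmd := (WithTop.ne_top_of_add_le_add (hg x y) hx hy).2
    have hA := (WithTop.ne_top_of_add_le_add h₁ hx hmd).1
    exact WithTop.add_ne_top.mpr ⟨(WithTop.ne_top_of_add_le_add h₂ hA hy).2, hmd⟩
  refine WithTop.le_of_add_le_add_of_le ?_ le_rfl hfin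
  calc g ((x - (a + b : ℕ)) ⊔ y) + g (x ⊓ (y + (a + b : ℕ))) + (g C + g md)
      = (g ((x - (a + b : ℕ)) ⊔ y) + g C) + (g md + g (x ⊓ (y + (a + b : ℕ)))) := by abel
    _ ≤ (g A + g y) + (g A' + g C) := add_le_add h₂ h₃
    _ = (g A + g A') + g y + g C := by abel
    _ ≤ (g x + g md) + g y + g C := by gcongr
    _ = g x + g y + (g C + g md) := by abel

theorem LnatConvex.translationSubmodularAt_of_natAbs_sub_le (hg : LnatConvex g) (D α : ℕ)
    (x y : Fin n → ℤ) (hD : ∀ i, (x i - y i).natAbs ≤ D) : TranslationSubmodularAt g α x y := by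
  induction D using Nat.strong_induction_on generalizing α x y with
  | _ D ihD =>
  induction α using Nat.strong_induction_on generalizing x y with
  | _ α ihα =>
  rcases Nat.eq_zero_or_pos α with rfl | hα
  · simpa [TranslationSubmodularAt, SubmodularAt] using
      hg.submodularAt_of_natAbs_sub_le D x y hD
  by_cases hD₁ : D ≤ 1
  · have e₁ : (x - α) ⊔ y = y := by
      ext i; have := hD i; simp only [Pi.sup_apply, Pi.sub_apply, Pi.natCast_apply]; omega
    have e₂ : x ⊓ (y + α) = x := by
      ext i; have := hD i; simp only [Pi.inf_apply, Pi.add_apply, Pi.natCast_apply]; omega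
    rw [TranslationSubmodularAt, e₁, e₂, add_comm]
  -- For `α = 1` the halving step below shrinks the distance only when `D ≥ 3`.
  by_cases h₁₂ : α = 1 ∧ D ≤ 2
  · obtain ⟨rfl, hD₂⟩ := h₁₂
    exact hg.translationSubmodularAt_one fun i => (hD i).trans hD₂
  obtain ⟨a, b, rfl, hba, hab⟩ : ∃ a b : ℕ, α = a + b ∧ b ≤ a ∧ a ≤ b + 1 :=
    ⟨(α + 1) / 2, α / 2, by omega, by omega, by omega⟩
  refine hg.translationSubmodularAt_add hba hab
    (ihD (D - 1) (by omega) a x _ fun i => ?_) (ihα b (by omega) _ y fun i => ?_) ?_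
  · have := hD i; simp only [midpointFloor_apply]; omega
  · have := hD i
    simp only [midpointFloor_apply, Pi.sup_apply, Pi.sub_apply, Pi.natCast_apply]; omega
  rcases Nat.lt_or_ge 1 (a + b) with hα₂ | hα₁
  · refine ihα a (by omega) _ _ fun i => ?_
    have := hD i
    simp only [midpointFloor_apply, Pi.sup_apply, Pi.inf_apply, Pi.sub_apply, Pi.add_apply,
      Pi.natCast_apply]; omega
  · refine ihD (D - 1) (by omega) a _ _ fun i => ?_
    have := hD i
    simp only [midpointFloor_apply, Pi.sup_apply, Pi.inf_apply, Pi.sub_apply, Pi.add_apply,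
      Pi.natCast_apply]; omega

theorem lnatConvex_iff_translationSubmodular : LnatConvex g ↔ TranslationSubmodular g :=
  ⟨fun hg α x y => hg.translationSubmodularAt_of_natAbs_sub_le _ α x y (natAbs_sub_le_sum x y),
    TranslationSubmodular.lnatConvex⟩

end

theorem lnatConvex_scaling_general {n : ℕ} (g : (Fin n → ℤ) → WithTop ℝ) (s : ℕ)
    (hg : LnatConvex g) :
    LnatConvex (fun p : Fin n → ℤ => g ((s : ℤ) • p)) :=
  lnatConvex_iff_translationSubmodular.2
    ((lnatConvex_iff_translationSubmodular.1 hg).comp_smul s)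

theorem lnatConvex_scaling {n : ℕ} (g : (Fin n → ℤ) → WithTop ℝ) (s : ℕ)
    (hs : 0 < s) (hg : LnatConvex g) :
    LnatConvex (fun p : Fin n → ℤ => g ((s : ℤ) • p)) :=
  lnatConvex_scaling_general g s hg
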